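/- arXiv:1511.06638 — 2 statements merged into one kernel-verified Lean document; each statement's English description precedes it below -/
import Mathlib

section
/- Let (P_t)_{t>0} be a sub-Markovian strongly Feller semigroup on ℝ^d with P_t f → f uniformly as t → 0 for f ∈ C_0(ℝ^d), and let G be its potential operator. If for some nonnegative continuous compactly supported function f and points x ≠ y, λ > 0, we have Gf finite everywhere, then there exists a nonnegative Borel function φ with Gφ(x) ≠ λ Gφ(y); i.e., the family {Gφ : φ ∈ B⁺(ℝ^d)} is linearly separating. -/
/-!
Take a Urysohn function `f ∈ C_c⁺` with `f x = 1` and `f y = 0`. If `G f` does not already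
separate, then `u t = P_t f x - λ P_t f y` has integral `0` over `(0, ∞)`; since `u → 1` as
`t → 0⁺`, the tail integral over `(t₀, ∞)` is negative for some `t₀ > 0`. By the semigroup law
that tail is `G (P_{t₀} f) x - λ G (P_{t₀} f) y`, and `φ = P_{t₀} f` is Borel by the strong Feller
property and nonnegative because `P_t 0 = 0`: the orbit `t ↦ P_t 0 z` is nonpositive,
nonincreasing and integrable on `(0, ∞)`.
-/

open MeasureTheory Set Filter Topology

theorem setIntegral_Ioi_comp_add_right (g : ℝ → ℝ) (a b : ℝ) :
    ∫ t in Ioi b, g (t + a) = ∫ t in Ioi (b + a), g t := by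
  have h := (measurePreserving_add_right volume a).setIntegral_preimage_emb
    (measurableEmbedding_addRight a) g (Ioi (b + a))
  rwa [show (· + a) ⁻¹' Ioi (b + a) = Ioi b by ext; simp] at h

theorem nonneg_of_antitoneOn_of_integrableOn_Ioi {g : ℝ → ℝ} {a : ℝ}
    (hg : AntitoneOn g (Ioi a)) (hint : IntegrableOn g (Ioi a)) {t : ℝ} (ht : a < t) :
    0 ≤ g t := by
  by_contra! hneg
  have hfin : volume.restrict (Ioi t) {s | g s ≤ g t} < ⊤ :=
    (hint.mono_set (Ioi_subset_Ioi ht.le)).measure_le_lt_top hneg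
  have hsub : Ioi t ⊆ {s | g s ≤ g t} := fun s hs =>
    hg (mem_Ioi.2 ht) (mem_Ioi.2 (ht.trans hs)) hs.le
  refine hfin.ne (top_unique ?_)
  calc ⊤ = volume.restrict (Ioi t) (Ioi t) := by
        rw [Measure.restrict_apply_self, Real.volume_Ioi]
    _ ≤ _ := measure_mono hsub

theorem exists_setIntegral_Ioi_lt {u : ℝ → ℝ} {a : ℝ} (hint : IntegrableOn u (Ioi a))
    (hpos : ∀ᶠ s in 𝓝[>] a, 0 < u s) :
    ∃ t > a, ∫ s in Ioi t, u s < ∫ s in Ioi a, u s := by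
  obtain ⟨t, hat, ht⟩ := (nhdsGT_basis a).eventually_iff.1 hpos
  have hhead : 0 < ∫ s in a..t, u s :=
    intervalIntegral.intervalIntegral_pos_of_pos_on
      ((intervalIntegrable_iff_integrableOn_Ioc_of_le hat.le).2
        (hint.mono_set Ioc_subset_Ioi_self)) (fun s hs => ht hs) hat
  rw [intervalIntegral.integral_of_le hat.le] at hhead
  refine ⟨t, hat, ?_⟩
  rw [← Ioc_union_Ioi_eq_Ioi hat.le, setIntegral_union (Ioc_disjoint_Ioi le_rfl)
    measurableSet_Ioi (hint.mono_set Ioc_subset_Ioi_self) (hint.mono_set (Ioi_subset_Ioi hat.le))]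
  linarith

section Semigroup

variable {X : Type*} {P : ℝ → (X → ℝ) → (X → ℝ)}

theorem setIntegral_Ioi_semigroup_comp
    (hsemi : ∀ t > (0:ℝ), ∀ s > (0:ℝ), ∀ f, P t (P s f) = P (t + s) f)
    {s : ℝ} (hs : 0 < s) (f : X → ℝ) (z : X) :
    ∫ t in Ioi 0, P t (P s f) z = ∫ t in Ioi s, P t f z := by
  rw [setIntegral_congr_fun measurableSet_Ioi fun t ht => congrFun (hsemi t ht s hs f) z,
    setIntegral_Ioi_comp_add_right (fun t => P t f z), zero_add]

theorem semigroup_apply_zero_eq_zero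
    (hsemi : ∀ t > (0:ℝ), ∀ s > (0:ℝ), ∀ f, P t (P s f) = P (t + s) f)
    (hpos : ∀ t > (0:ℝ), ∀ f g, f ≤ g → P t f ≤ P t g) (hzero : ∀ t > (0:ℝ), P t 0 ≤ 0)
    (hint : ∀ z, IntegrableOn (fun t => P t 0 z) (Ioi 0)) {t : ℝ} (ht : 0 < t) : P t 0 = 0 := by
  have hanti : ∀ z, AntitoneOn (fun t => P t 0 z) (Ioi 0) := by
    intro z s hs t _ hst
    rcases hst.eq_or_lt with rfl | hlt
    · exact le_rfl
    have hsplit : P s (P (t - s) 0) = P t 0 := by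
      rw [hsemi s hs (t - s) (sub_pos.2 hlt), add_sub_cancel]
    show P t 0 z ≤ P s 0 z
    rw [← hsplit]
    exact hpos s hs _ 0 (hzero (t - s) (sub_pos.2 hlt)) z
  funext z
  exact le_antisymm (hzero t ht z) (nonneg_of_antitoneOn_of_integrableOn_Ioi (hanti z) (hint z) ht)

theorem semigroup_nonneg
    (hsemi : ∀ t > (0:ℝ), ∀ s > (0:ℝ), ∀ f, P t (P s f) = P (t + s) f)
    (hpos : ∀ t > (0:ℝ), ∀ f g, f ≤ g → P t f ≤ P t g) (hzero : ∀ t > (0:ℝ), P t 0 ≤ 0)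
    (hint : ∀ z, IntegrableOn (fun t => P t 0 z) (Ioi 0)) {t : ℝ} (ht : 0 < t) {f : X → ℝ}
    (hf : 0 ≤ f) : 0 ≤ P t f :=
  semigroup_apply_zero_eq_zero hsemi hpos hzero hint ht ▸ hpos t ht 0 f hf

end Semigroup

theorem stmt7_general {d : ℕ}
    (P : ℝ → (EuclideanSpace ℝ (Fin d) → ℝ) → (EuclideanSpace ℝ (Fin d) → ℝ))
    (G : (EuclideanSpace ℝ (Fin d) → ℝ) → (EuclideanSpace ℝ (Fin d) → ℝ))
    (hG : ∀ f x, G f x = ∫ t in Ioi (0 : ℝ), P t f x)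
    (hsemi : ∀ t > (0:ℝ), ∀ s > (0:ℝ), ∀ f, P t (P s f) = P (t + s) f)
    (hpos : ∀ t > (0:ℝ), ∀ f g, f ≤ g → P t f ≤ P t g)
    (hsubmarkov : ∀ t > (0:ℝ), ∀ f, (∀ z, 0 ≤ f z) → ∀ c : ℝ, (∀ z, f z ≤ c) →
      ∀ z, P t f z ≤ c)
    (hfeller : ∀ t > (0:ℝ), ∀ f, Measurable f → (∃ c : ℝ, ∀ z, |f z| ≤ c) →
      Continuous (P t f))
    (hstrongcont : ∀ f : EuclideanSpace ℝ (Fin d) → ℝ, Continuous f → HasCompactSupport f →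
      TendstoUniformly (fun t z => P t f z) f (nhdsWithin 0 (Ioi 0)))
    (hGfin : ∀ f : EuclideanSpace ℝ (Fin d) → ℝ, Continuous f → HasCompactSupport f →
      (∀ z, 0 ≤ f z) → ∀ z, IntegrableOn (fun t => P t f z) (Ioi (0:ℝ)))
    (x y : EuclideanSpace ℝ (Fin d)) (hxy : x ≠ y) (lam : ℝ) :
    ∃ φ : EuclideanSpace ℝ (Fin d) → ℝ, Measurable φ ∧ (∀ z, 0 ≤ φ z) ∧
      G φ x ≠ lam * G φ y := by
  obtain ⟨f, hfx, hfy, hf_supp, hf01⟩ := exists_continuous_one_zero_of_isCompact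
    isCompact_singleton isClosed_singleton (disjoint_singleton.2 hxy)
  have hf_nonneg : ∀ z, 0 ≤ f z := fun z => (hf01 z).1
  by_cases hGf : G f x = lam * G f y
  swap
  · exact ⟨f, f.continuous.measurable, hf_nonneg, hGf⟩
  set u : ℝ → ℝ := fun t => P t f x - lam * P t f y
  have hint_x := hGfin f f.continuous hf_supp hf_nonneg x
  have hint_y := hGfin f f.continuous hf_supp hf_nonneg y
  have hu_pos : ∀ᶠ s in 𝓝[>] 0, 0 < u s := by
    have hconv := hstrongcont f f.continuous hf_supp
    have hlim : Tendsto u (𝓝[>] 0) (𝓝 (f x - lam * f y)) :=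
      (hconv.tendsto_at x).sub ((hconv.tendsto_at y).const_mul lam)
    rw [hfx rfl, hfy rfl] at hlim
    exact hlim.eventually (lt_mem_nhds (by norm_num))
  obtain ⟨t₀, ht₀, hlt⟩ : ∃ t > 0, ∫ s in Ioi t, u s < ∫ s in Ioi 0, u s :=
    exists_setIntegral_Ioi_lt (hint_x.sub (hint_y.const_mul lam)) hu_pos
  have hφ_meas : Measurable (P t₀ f) := (hfeller t₀ ht₀ f f.continuous.measurable
    ⟨1, fun z => (abs_of_nonneg (hf01 z).1).trans_le (hf01 z).2⟩).measurable
  have hφ_nonneg : 0 ≤ P t₀ f := semigroup_nonneg hsemi hpos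
    (fun t ht => hsubmarkov t ht 0 (fun _ => le_rfl) 0 (fun _ => le_rfl))
    (hGfin 0 continuous_const HasCompactSupport.zero (fun _ => le_rfl)) ht₀ hf_nonneg
  refine ⟨P t₀ f, hφ_meas, hφ_nonneg, fun hsep => ?_⟩
  have hu0 : ∫ s in Ioi 0, u s = 0 := by
    rw [integral_sub hint_x (hint_y.const_mul lam), integral_const_mul, ← hG, ← hG, hGf, sub_self]
  have hut₀ : ∫ s in Ioi t₀, u s = 0 := by
    rw [integral_sub (hint_x.mono_set (Ioi_subset_Ioi ht₀.le))
      ((hint_y.mono_set (Ioi_subset_Ioi ht₀.le)).const_mul lam), integral_const_mul,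
      ← setIntegral_Ioi_semigroup_comp hsemi ht₀, ← setIntegral_Ioi_semigroup_comp hsemi ht₀,
      ← hG, ← hG, hsep, sub_self]
  linarith

/-- for a sub-Markovian strongly Feller semigroup `(P_t)` on ℝ^d with
`P_t f → f` uniformly as `t → 0⁺` for `f ∈ C_0`, whose potential `G f = ∫_0^∞ P_t f dt` is
finite on nonnegative continuous compactly supported functions, the family
`{Gφ : φ ∈ B⁺(ℝ^d)}` is linearly separating: for all `x ≠ y` and `λ > 0` there is a
nonnegative Borel `φ` with `Gφ(x) ≠ λ Gφ(y)`. -/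
theorem stmt7 {d : ℕ}
    (P : ℝ → (EuclideanSpace ℝ (Fin d) → ℝ) → (EuclideanSpace ℝ (Fin d) → ℝ))
    (G : (EuclideanSpace ℝ (Fin d) → ℝ) → (EuclideanSpace ℝ (Fin d) → ℝ))
    (hG : ∀ f x, G f x = ∫ t in Ioi (0 : ℝ), P t f x)
    (hsemi : ∀ t > (0:ℝ), ∀ s > (0:ℝ), ∀ f, P t (P s f) = P (t + s) f)
    (hpos : ∀ t > (0:ℝ), ∀ f g, f ≤ g → P t f ≤ P t g)
    (hsubmarkov : ∀ t > (0:ℝ), ∀ f, (∀ z, 0 ≤ f z) → ∀ c : ℝ, (∀ z, f z ≤ c) →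
      ∀ z, P t f z ≤ c)
    (hfeller : ∀ t > (0:ℝ), ∀ f, Measurable f → (∃ c : ℝ, ∀ z, |f z| ≤ c) →
      Continuous (P t f))
    (hstrongcont : ∀ f : EuclideanSpace ℝ (Fin d) → ℝ, Continuous f → HasCompactSupport f →
      TendstoUniformly (fun t z => P t f z) f (nhdsWithin 0 (Ioi 0)))
    (hGfin : ∀ f : EuclideanSpace ℝ (Fin d) → ℝ, Continuous f → HasCompactSupport f →
      (∀ z, 0 ≤ f z) → ∀ z, IntegrableOn (fun t => P t f z) (Ioi (0:ℝ)))
    (x y : EuclideanSpace ℝ (Fin d)) (hxy : x ≠ y) (lam : ℝ) (hlam : 0 < lam) :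
    ∃ φ : EuclideanSpace ℝ (Fin d) → ℝ, Measurable φ ∧ (∀ z, 0 ≤ φ z) ∧
      G φ x ≠ lam * G φ y :=
  stmt7_general P G hG hsemi hpos hsubmarkov hfeller hstrongcont hGfin x y hxy lam
end

section
/- For the Dunkl heat kernel p_t^k one has 0 ≤ p_t^k(x,y) ≤ (2/(d_k (4t)^{λ+1} Γ(λ+1))) exp(−(|x|−|y|)²/(4t)): the Gaussian off-diagonal bound in terms of the difference of norms. -/
/-!
Every `w y` has norm `‖y‖`, so every point `ξ` of the convex hull of the orbit lies in the closed
ball of radius `‖y‖`. Cauchy–Schwarz then gives `⟪x, ξ⟫ ≤ ‖x‖ ‖y‖`, i.e. the exponent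
`‖x‖² + ‖y‖² - 2⟪x, ξ⟫` is at least `(‖x‖ - ‖y‖)²`, and integrating against a probability
measure preserves the resulting pointwise bound.
-/

open MeasureTheory Real Set
open scoped RealInnerProductSpace

lemma norm_le_of_mem_convexHull_range_apply {ι E : Type*} [SeminormedAddCommGroup E]
    [NormedSpace ℝ E] (f : ι → E ≃ₗᵢ[ℝ] E) {y ξ : E}
    (hξ : ξ ∈ convexHull ℝ (range fun i => f i y)) : ‖ξ‖ ≤ ‖y‖ := by
  have horbit : (range fun i => f i y) ⊆ Metric.closedBall 0 ‖y‖ := by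
    rintro _ ⟨i, rfl⟩
    simp
  simpa using convexHull_min horbit (convex_closedBall 0 ‖y‖) hξ

lemma sq_norm_sub_norm_le_of_norm_le {E : Type*} [SeminormedAddCommGroup E]
    [InnerProductSpace ℝ E] (x : E) {y ξ : E} (hξ : ‖ξ‖ ≤ ‖y‖) :
    (‖x‖ - ‖y‖) ^ 2 ≤ ‖x‖ ^ 2 + ‖y‖ ^ 2 - 2 * ⟪x, ξ⟫ := by
  have hinner : ⟪x, ξ⟫ ≤ ‖x‖ * ‖y‖ :=
    (real_inner_le_norm x ξ).trans (mul_le_mul_of_nonneg_left hξ (norm_nonneg x))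
  nlinarith

lemma integral_le_of_ae_le_const {α : Type*} [MeasurableSpace α] {μ : Measure α}
    [IsProbabilityMeasure μ] {f : α → ℝ} {C : ℝ} (hf : 0 ≤ᵐ[μ] f) (hC : f ≤ᵐ[μ] fun _ => C) :
    ∫ a, f a ∂μ ≤ C := by
  simpa using integral_mono_of_nonneg hf (integrable_const C) hC

theorem stmt12_general {d : ℕ} (lam dk t : ℝ) (hlam : 0 < lam) (hdk : 0 < dk) (ht : 0 < t)
    (W : Subgroup (EuclideanSpace ℝ (Fin d) ≃ₗᵢ[ℝ] EuclideanSpace ℝ (Fin d)))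
    (x y : EuclideanSpace ℝ (Fin d))
    (μ : Measure (EuclideanSpace ℝ (Fin d))) [IsProbabilityMeasure μ]
    (hsupp : ∀ᵐ ξ ∂μ, ξ ∈ convexHull ℝ
      (Set.range fun w : W => (w : EuclideanSpace ℝ (Fin d) ≃ₗᵢ[ℝ] EuclideanSpace ℝ (Fin d)) y))
    (p : ℝ)
    (hp : p = 2 / (dk * (4 * t) ^ (lam + 1) * Gamma (lam + 1)) *
      ∫ ξ, exp (-(‖x‖ ^ 2 + ‖y‖ ^ 2 - 2 * ⟪x, ξ⟫) / (4 * t)) ∂μ) :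
    0 ≤ p ∧
      p ≤ 2 / (dk * (4 * t) ^ (lam + 1) * Gamma (lam + 1)) *
        exp (-(‖x‖ - ‖y‖) ^ 2 / (4 * t)) := by
  have hconst : 0 ≤ 2 / (dk * (4 * t) ^ (lam + 1) * Gamma (lam + 1)) := by
    have := Gamma_pos_of_pos (by linarith : 0 < lam + 1)
    positivity
  have hpointwise : ∀ᵐ ξ ∂μ, exp (-(‖x‖ ^ 2 + ‖y‖ ^ 2 - 2 * ⟪x, ξ⟫) / (4 * t)) ≤
      exp (-(‖x‖ - ‖y‖) ^ 2 / (4 * t)) := by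
    filter_upwards [hsupp] with ξ hξ
    have hexponent := sq_norm_sub_norm_le_of_norm_le x
      (norm_le_of_mem_convexHull_range_apply (fun w : W => (w : _)) hξ)
    gcongr
  have hintegral := integral_le_of_ae_le_const (ae_of_all μ fun _ => (exp_pos _).le) hpointwise
  subst hp
  exact ⟨mul_nonneg hconst (integral_nonneg fun _ => (exp_pos _).le),
    mul_le_mul_of_nonneg_left hintegral hconst⟩

/-- Gaussian off-diagonal bound for the Dunkl heat kernel:
`0 ≤ p_t^k(x,y) ≤ (2/(d_k (4t)^{λ+1} Γ(λ+1))) exp(-(|x|-|y|)²/(4t))`. -/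
theorem stmt12 {d : ℕ} (lam dk t : ℝ) (hlam : 0 < lam) (hdk : 0 < dk) (ht : 0 < t)
    (W : Subgroup (EuclideanSpace ℝ (Fin d) ≃ₗᵢ[ℝ] EuclideanSpace ℝ (Fin d))) [Finite W]
    (x y : EuclideanSpace ℝ (Fin d))
    (μ : Measure (EuclideanSpace ℝ (Fin d))) [IsProbabilityMeasure μ]
    (hsupp : ∀ᵐ ξ ∂μ, ξ ∈ convexHull ℝ
      (Set.range fun w : W => (w : EuclideanSpace ℝ (Fin d) ≃ₗᵢ[ℝ] EuclideanSpace ℝ (Fin d)) y))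
    (p : ℝ)
    (hp : p = 2 / (dk * (4 * t) ^ (lam + 1) * Gamma (lam + 1)) *
      ∫ ξ, exp (-(‖x‖ ^ 2 + ‖y‖ ^ 2 - 2 * ⟪x, ξ⟫) / (4 * t)) ∂μ) :
    0 ≤ p ∧
      p ≤ 2 / (dk * (4 * t) ^ (lam + 1) * Gamma (lam + 1)) *
        exp (-(‖x‖ - ‖y‖) ^ 2 / (4 * t)) :=
  stmt12_general lam dk t hlam hdk ht W x y μ hsupp p hp
end
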